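/- If |z| ≤ λ and λ > 0, a > 2, then β = 0 is the unique global minimizer of the SCAD-penalized univariate least squares objective Q(β) = (1/2)(z−β)² + p_λ(|β|), where p_λ is the SCAD penalty. Consequently, if the true parameter satisfies |β₀| < λ, the SCAD estimator shrinks values z with |z| ≤ λ exactly to zero. -/
import Mathlib


/-- The SCAD penalty on `[0,∞)`: `p_λ(θ) = λθ` for `0 ≤ θ ≤ λ`,
`p_λ(θ) = −(θ² − 2aλθ + λ²)/(2(a−1))` for `λ < θ ≤ aλ`, and
`p_λ(θ) = (a+1)λ²/2` for `θ > aλ`. -/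
noncomputable def scadPenalty (lam a θ : ℝ) : ℝ :=
  if θ ≤ lam then lam * θ
  else if θ ≤ a * lam then -(θ ^ 2 - 2 * a * lam * θ + lam ^ 2) / (2 * (a - 1))
  else (a + 1) * lam ^ 2 / 2

/-- If `|z| ≤ λ`, then `β = 0` is the unique global minimizer of the
SCAD-penalized univariate least squares objective
`Q(β) = (1/2)(z−β)² + p_λ(|β|)`. -/
theorem scad_thresholding_to_zero (z lam a : ℝ) (hlam : 0 < lam) (ha : 2 < a)
    (hz : |z| ≤ lam) :
    ∀ β : ℝ, β ≠ 0 →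
      (1 / 2) * (z - 0) ^ 2 + scadPenalty lam a |(0 : ℝ)|
        < (1 / 2) * (z - β) ^ 2 + scadPenalty lam a |β| := by
  intro β hβ
  have ht : 0 < |β| := abs_pos.mpr hβ
  have hzb : z * β ≤ lam * |β| := by
    calc z * β ≤ |z * β| := le_abs_self _
    _ = |z| * |β| := abs_mul _ _
    _ ≤ lam * |β| := mul_le_mul_of_nonneg_right hz (abs_nonneg β)
  have hsq : |β| ^ 2 = β ^ 2 := sq_abs β
  unfold scadPenalty
  rw [abs_zero]
  rw [if_pos hlam.le]
  split_ifs with h1 h2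
  · nlinarith
  · push_neg at h1
    have ha1 : (0:ℝ) < 2 * (a - 1) := by linarith
    have hP : lam * |β| - |β| ^ 2 / 2
        < -(|β| ^ 2 - 2 * a * lam * |β| + lam ^ 2) / (2 * (a - 1)) := by
      rw [lt_div_iff₀ ha1]
      nlinarith [mul_pos hlam (sub_pos.mpr h1), mul_nonneg (show (0:ℝ) ≤ a - 2 by linarith) (sq_nonneg |β|)]
    nlinarith
  · push_neg at h1 h2
    nlinarith [sq_nonneg (|β| - lam)]
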